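/- arXiv:2105.06832 — 6 statements merged into one kernel-verified Lean document; each statement's English description precedes it below -/
import Mathlib

section
/- The left dual of a seminorm on a category is itself a seminorm: it assigns 0 to every identity morphism and satisfies the triangle inequality ‖f∘g‖^{*L} ≤ ‖f‖^{*L} + ‖g‖^{*L}. -/
open CategoryTheory ENNReal

/-- The left dual of a seminorm on a category:
`‖f‖^{*L} = sup⁰_{f' : X' → X} (‖f'‖ - ‖f' ≫ f‖)` (truncated subtraction in `ℝ≥0∞`
implements both the `sup⁰` clamping at 0 and the `∞ - ∞` convention). -/
noncomputable def leftDual {C : Type*} [Category C]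
    (n : ∀ {X Y : C}, (X ⟶ Y) → ℝ≥0∞) {X Y : C} (f : X ⟶ Y) : ℝ≥0∞ :=
  ⨆ (X' : C) (f' : X' ⟶ X), (n f' - n (f' ≫ f))

/-- The left dual of a seminorm is again a seminorm. -/
theorem leftDual_is_seminorm {C : Type*} [Category C]
    (n : ∀ {X Y : C}, (X ⟶ Y) → ℝ≥0∞)
    (hid : ∀ X : C, n (𝟙 X) = 0)
    (htri : ∀ {X Y Z : C} (f : X ⟶ Y) (g : Y ⟶ Z), n (f ≫ g) ≤ n f + n g) :
    (∀ X : C, leftDual n (𝟙 X) = 0) ∧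
    (∀ {X Y Z : C} (f : X ⟶ Y) (g : Y ⟶ Z),
      leftDual n (f ≫ g) ≤ leftDual n f + leftDual n g) := by
  constructor
  · intro X
    simp [leftDual]
  · intro X Y Z f g
    rw [leftDual]
    refine iSup₂_le fun X' f' => ?_
    calc n f' - n (f' ≫ f ≫ g)
        ≤ (n f' - n (f' ≫ f)) + (n (f' ≫ f) - n (f' ≫ f ≫ g)) :=
          tsub_le_tsub_add_tsub
      _ ≤ leftDual n f + leftDual n g := by
          gcongr
          · exact le_iSup₂ (f := fun X' (f' : X' ⟶ X) => n f' - n (f' ≫ f)) X' f'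
          · rw [← Category.assoc]
            exact le_iSup₂ (f := fun X'' (h : X'' ⟶ Y) => n h - n (h ≫ g)) X' (f' ≫ f)
end

section
/- If (V,X) and (W,Y) are finite simplicial complexes and there exist injective simplicial maps f: (V,X) → (W,Y) and g: (W,Y) → (V,X), then (V,X) and (W,Y) are isomorphic as simplicial complexes. -/
/-- An abstract simplicial complex structure on a vertex type `V`:
a set `X` of finite nonempty subsets of `V` containing all singletons and closed
under passing to nonempty subsets. -/
def IsSimplicialComplex {V : Type*} (X : Set (Finset V)) : Prop :=
  (∀ s ∈ X, s.Nonempty) ∧ (∀ v : V, {v} ∈ X) ∧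
    (∀ s ∈ X, ∀ t ⊆ s, t.Nonempty → t ∈ X)

/-- Schröder–Bernstein for finite simplicial complexes: if there are injective
simplicial maps in both directions, the complexes are isomorphic. -/
theorem finite_simplicial_schroeder_bernstein
    {V W : Type*} [Finite V] [Finite W] [DecidableEq V] [DecidableEq W]
    (X : Set (Finset V)) (Y : Set (Finset W))
    (hX : IsSimplicialComplex X) (hY : IsSimplicialComplex Y)
    (f : V → W) (hf : Function.Injective f) (hfs : ∀ s ∈ X, s.image f ∈ Y)
    (g : W → V) (hg : Function.Injective g) (hgs : ∀ s ∈ Y, s.image g ∈ X) :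
    ∃ h : V ≃ W, ∀ s : Finset V, s ∈ X ↔ s.image h ∈ Y := by
  have := Fintype.ofFinite V
  have := Fintype.ofFinite W
  -- g ∘ f is an injective self-map of a finite type, hence bijective
  have hgf : Function.Bijective (g ∘ f) :=
    Finite.injective_iff_bijective.mp (hg.comp hf)
  have hfg : Function.Bijective (f ∘ g) :=
    Finite.injective_iff_bijective.mp (hf.comp hg)
  have hfbij : Function.Bijective f :=
    ⟨hf, Function.Surjective.of_comp hfg.2⟩
  set φ : Equiv.Perm V := Equiv.ofBijective _ hgf with hφ
  have hφfun : (φ : V → V) = g ∘ f := rfl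
  -- φ maps X into X
  have hstep : ∀ t ∈ X, t.image (φ : V → V) ∈ X := by
    intro t ht
    have : t.image (g ∘ f) ∈ X := by
      rw [← Finset.image_image]
      exact hgs _ (hfs _ ht)
    simpa [hφfun] using this
  have hpow : ∀ k : ℕ, ∀ t ∈ X, t.image ((φ ^ k : Equiv.Perm V) : V → V) ∈ X := by
    intro k
    induction k with
    | zero => intro t ht; simpa using ht
    | succ n ih =>
      intro t ht
      have h1 := hstep t ht
      have h2 := ih _ h1
      rw [Finset.image_image] at h2
      have : ((φ ^ (n + 1) : Equiv.Perm V) : V → V) = ((φ ^ n : Equiv.Perm V) : V → V) ∘ (φ : V → V) := by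
        ext x
        simp [pow_succ, Equiv.Perm.mul_apply]
      rw [this]
      exact h2
  -- backward direction using finite order of φ
  have hn : φ ^ (orderOf φ) = 1 := pow_orderOf_eq_one φ
  have hnpos : 0 < orderOf φ := orderOf_pos φ
  refine ⟨Equiv.ofBijective f hfbij, fun s => ⟨fun hs => hfs s hs, fun hs => ?_⟩⟩
  have h1 : (s.image f).image g ∈ X := hgs _ hs
  have h2 : s.image (φ : V → V) ∈ X := by
    rw [hφfun, ← Finset.image_image]; exact h1
  have h3 := hpow (orderOf φ - 1) _ h2
  rw [Finset.image_image] at h3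
  have hcomp : ((φ ^ (orderOf φ - 1) : Equiv.Perm V) : V → V) ∘ (φ : V → V)
      = ((φ ^ (orderOf φ) : Equiv.Perm V) : V → V) := by
    ext x
    have : φ ^ (orderOf φ - 1) * φ = φ ^ (orderOf φ) := by
      rw [← pow_succ, Nat.sub_add_cancel hnpos]
    calc (φ ^ (orderOf φ - 1)) (φ x) = (φ ^ (orderOf φ - 1) * φ) x := rfl
      _ = (φ ^ (orderOf φ)) x := by rw [this]
  rw [hcomp, hn] at h3
  simpa using h3
end

section
/- If V and W are Hilbert spaces and there exist bounded injective linear 'expansive' operators A: V → W and B: W → V with ‖Av‖ ≥ ‖v‖ for all v ∈ V and ‖Bw‖ ≥ ‖w‖ for all w ∈ W, then V and W are isometrically isomorphic. -/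
open Function

/-- From an injective continuous linear map between Hilbert spaces, the Hilbert-basis
index of the domain embeds into that of the codomain. -/
lemma embed_of_injective_clm
    {V W : Type*} [NormedAddCommGroup V] [InnerProductSpace ℝ V] [CompleteSpace V]
    [NormedAddCommGroup W] [InnerProductSpace ℝ W] [CompleteSpace W]
    {ι κ : Type*} (bV : HilbertBasis ι ℝ V) (bW : HilbertBasis κ ℝ W)
    (A : V →L[ℝ] W) (hAinj : Function.Injective A) :
    Nonempty (ι ↪ κ) := by
  classical
  cases finite_or_infinite κ with
  | inl hfin =>
    -- finite-dimensional case
    have : Fintype κ := Fintype.ofFinite κ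
    have hFD : FiniteDimensional ℝ W :=
      Module.Finite.of_basis bW.toOrthonormalBasis.toBasis
    have hli : LinearIndependent ℝ (fun i => A (bV i)) := by
      have h1 : LinearIndependent ℝ bV := bV.orthonormal.linearIndependent
      exact h1.map' A.toLinearMap (LinearMap.ker_eq_bot.mpr hAinj)
    have hcard : Cardinal.mk ι ≤ Module.finrank ℝ W := hli.cardinalMk_le_finrank
    have : Finite ι := by
      have := Cardinal.lt_aleph0_iff_finite.mp
        (hcard.trans_lt (Cardinal.nat_lt_aleph0 _))
      exact this
    have : Fintype ι := Fintype.ofFinite ι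
    have h2 : Fintype.card ι ≤ Module.finrank ℝ W := hli.fintype_card_le_finrank
    have h3 : Module.finrank ℝ W = Fintype.card κ :=
      Module.finrank_eq_card_basis bW.toOrthonormalBasis.toBasis
    exact Function.Embedding.nonempty_of_card_le (h2.trans_eq h3)
  | inr hinf =>
    -- infinite-dimensional case: each `i` gives a nonzero coordinate, fibers are countable
    set S : κ → Set ι := fun k => {i | bW.repr (A (bV i)) k ≠ 0} with hS
    have hcount : ∀ k, (S k).Countable := by
      intro k
      have hsum : Summable fun i => ‖(inner ℝ (bV i) ((ContinuousLinearMap.adjoint A) (bW k)) : ℝ)‖ ^ 2 :=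
        bV.orthonormal.inner_products_summable _
      have := hsum.countable_support
      refine Set.Countable.mono ?_ this
      intro i hi
      simp only [Function.mem_support]
      intro hzero
      apply hi
      have : (inner ℝ (bV i) ((ContinuousLinearMap.adjoint A) (bW k)) : ℝ) = 0 := by
        by_contra h
        exact h (by simpa [pow_eq_zero_iff] using hzero)
      have h2 : (inner ℝ ((ContinuousLinearMap.adjoint A) (bW k)) (bV i) : ℝ) = 0 := by
        rw [real_inner_comm]; exact this
      rw [ContinuousLinearMap.adjoint_inner_left] at h2
      show bW.repr (A (bV i)) k = 0
      rw [bW.repr_apply_apply]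
      exact h2
    have hmem : ∀ i, ∃ k, i ∈ S k := by
      intro i
      by_contra h
      push_neg at h
      have : bW.repr (A (bV i)) = 0 := by
        ext k
        have := h k
        simpa [hS] using this
      have hA0 : A (bV i) = 0 := by
        have := bW.repr.injective (by simpa using this)
        simpa using this
      have : bV i = 0 := hAinj (by simpa using hA0)
      have hne : bV i ≠ 0 := bV.orthonormal.ne_zero i
      exact hne this
    -- build embedding ι ↪ κ × ℕ
    have hembN : ∀ k, ∃ f : S k → ℕ, Function.Injective f := fun k =>
      Set.countable_iff_exists_injective.mp (hcount k)
    choose fN hfN using hembN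
    choose kk hkk using hmem
    have hinjσ : Function.Injective (fun i => (⟨kk i, ⟨i, hkk i⟩⟩ : Σ k, S k)) := by
      intro i j hij
      exact congrArg (fun p : Σ k, S k => (p.2 : ι)) hij
    have hinj2 : Function.Injective (fun p : Σ k, S k => ((p.1, fN p.1 p.2) : κ × ℕ)) := by
      rintro ⟨k1, x1⟩ ⟨k2, x2⟩ hpq
      simp only [Prod.mk.injEq] at hpq
      obtain ⟨h1, h2⟩ := hpq
      subst h1
      exact Sigma.ext rfl (heq_of_eq (hfN k1 h2))
    have e1 : ι ↪ κ × ℕ :=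
      (⟨_, hinjσ⟩ : ι ↪ Σ k, S k).trans (⟨_, hinj2⟩ : (Σ k, S k) ↪ κ × ℕ)
    have e2 : Nonempty (κ × ℕ ≃ κ) := by
      rw [← Cardinal.eq]
      simp only [Cardinal.mk_prod, Cardinal.mk_denumerable]
      rw [Cardinal.lift_id', Cardinal.lift_aleph0]
      exact Cardinal.mul_aleph0_eq (Cardinal.aleph0_le_mk κ)
    obtain ⟨e2⟩ := e2
    exact ⟨e1.trans e2.toEmbedding⟩

/-- Schröder–Bernstein for Hilbert spaces: if there are bounded injective expansive
linear operators `A : V → W` and `B : W → V`, then `V` and `W` are isometrically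
isomorphic. -/
theorem hilbert_schroeder_bernstein
    {V W : Type*} [NormedAddCommGroup V] [InnerProductSpace ℝ V] [CompleteSpace V]
    [NormedAddCommGroup W] [InnerProductSpace ℝ W] [CompleteSpace W]
    (A : V →L[ℝ] W) (B : W →L[ℝ] V)
    (hAinj : Function.Injective A) (hBinj : Function.Injective B)
    (hA : ∀ v : V, ‖v‖ ≤ ‖A v‖) (hB : ∀ w : W, ‖w‖ ≤ ‖B w‖) :
    Nonempty (V ≃ₗᵢ[ℝ] W) := by
  classical
  obtain ⟨sV, bV, -⟩ := exists_hilbertBasis ℝ V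
  obtain ⟨sW, bW, -⟩ := exists_hilbertBasis ℝ W
  obtain ⟨f⟩ := embed_of_injective_clm bV bW A hAinj
  obtain ⟨g⟩ := embed_of_injective_clm bW bV B hBinj
  obtain ⟨h, hbij⟩ := Function.Embedding.schroeder_bernstein f.injective g.injective
  let e : sV ≃ sW := Equiv.ofBijective h hbij
  -- reindex bW by e to get a Hilbert basis of W indexed by sV
  have horth : Orthonormal ℝ (fun i : sV => bW (e i)) :=
    bW.orthonormal.comp e e.injective
  have hrange : Set.range (fun i : sV => bW (e i)) = Set.range bW := by
    ext x; constructor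
    · rintro ⟨i, rfl⟩; exact ⟨e i, rfl⟩
    · rintro ⟨k, rfl⟩; exact ⟨e.symm k, by simp⟩
  have hsp : ⊤ ≤ (Submodule.span ℝ (Set.range (fun i : sV => bW (e i)))).topologicalClosure := by
    rw [hrange, bW.dense_span]
  let bW' : HilbertBasis sV ℝ W := HilbertBasis.mk horth hsp
  exact ⟨bV.repr.trans bW'.repr.symm⟩
end

section
/- Let f: X → Y be a continuous map between topological spaces. Then sup over nonempty connected subsets C ⊆ Y of |log(number of connected components of f⁻¹(C))| equals the component seminorm ‖f‖_comp, defined as sup⁰ over subsets C ⊆ Y with 0 < #(components of C) < ∞ of (|log #(components of f⁻¹C)| − log #(components of C)). -/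
open scoped ENNReal

/-- Extended logarithm of an extended natural number. -/
noncomputable def elog (n : ℕ∞) : EReal := ENNReal.log (n : ℝ≥0∞)

/-- Absolute value on the extended reals. -/
noncomputable def eabs (x : EReal) : EReal := max x (-x)

/-- The number of connected components of a subset of a topological space,
valued in `ℕ∞` (all infinite cardinalities collapsed to `∞`). -/
noncomputable def compCount {Y : Type*} [TopologicalSpace Y] (C : Set Y) : ℕ∞ :=
  ENat.card (ConnectedComponents C)

/-- The component seminorm
`‖f‖_comp = sup⁰ {|log #I(f⁻¹C)| - log #I(C) : C ⊆ Y, 0 < #I(C) < ∞}`. -/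
noncomputable def compNorm {X Y : Type*} [TopologicalSpace X] [TopologicalSpace Y]
    (f : X → Y) : EReal :=
  max 0 (⨆ (C : Set Y) (_ : 0 < compCount C ∧ compCount C < ⊤),
    (eabs (elog (compCount (f ⁻¹' C))) - elog (compCount C)))

open Set Topology

section Aux
variable {X Y : Type*} [TopologicalSpace X] [TopologicalSpace Y]

lemma CCmk_out {α : Type*} [TopologicalSpace α] (k : ConnectedComponents α) :
    ConnectedComponents.mk (Quotient.out k) = k := Quotient.out_eq k

/-- The connected component of `C` indexed by `i`, as a subset of `Y`. -/
def compSet (C : Set Y) (i : ConnectedComponents C) : Set Y :=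
  Subtype.val '' (ConnectedComponents.mk ⁻¹' {i})

lemma compSet_subset (C : Set Y) (i : ConnectedComponents C) : compSet C i ⊆ C := by
  rintro y ⟨x, -, rfl⟩; exact x.2

lemma isConnected_compSet (C : Set Y) (i : ConnectedComponents C) :
    IsConnected (compSet C i) := by
  obtain ⟨x, rfl⟩ := ConnectedComponents.surjective_coe i
  unfold compSet
  rw [connectedComponents_preimage_singleton]
  exact isConnected_connectedComponent.image _ continuous_subtype_val.continuousOn

lemma mem_compSet {C : Set Y} {y : C} {i : ConnectedComponents C} :
    (y : Y) ∈ compSet C i ↔ ConnectedComponents.mk y = i := by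
  constructor
  · rintro ⟨x, hx, hxy⟩
    obtain rfl : x = y := Subtype.ext hxy
    exact hx
  · intro h; exact ⟨y, h, rfl⟩

variable {f : X → Y}

/-- The induced map on connected components of the preimage to components of `C`. -/
noncomputable def piMap (hf : Continuous f) (C : Set Y) :
    ConnectedComponents (f ⁻¹' C) → ConnectedComponents C :=
  Continuous.connectedComponentsLift
    (ConnectedComponents.continuous_coe.comp ((hf.comp continuous_subtype_val).subtype_mk
      (fun x => x.2)))

lemma piMap_coe (hf : Continuous f) (C : Set Y) (x : ↥(f ⁻¹' C)) :
    piMap hf C (ConnectedComponents.mk x) = ConnectedComponents.mk ⟨f x, x.2⟩ := rfl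

lemma coe_mem_preimage_compSet (hf : Continuous f) (C : Set Y) {x : ↥(f ⁻¹' C)}
    {i : ConnectedComponents C} (h : piMap hf C (ConnectedComponents.mk x) = i) :
    (x : X) ∈ f ⁻¹' compSet C i := by
  rw [piMap_coe] at h
  exact mem_compSet.mpr h

lemma mk_eq_of_preconnected {s K : Set X} (hK : IsPreconnected K) (hKs : K ⊆ s)
    {a b : s} (ha : (a : X) ∈ K) (hb : (b : X) ∈ K) :
    (ConnectedComponents.mk a = ConnectedComponents.mk b) := by
  rw [ConnectedComponents.coe_eq_coe']
  have hT : IsPreconnected (Subtype.val ⁻¹' K : Set s) := by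
    rw [← IsInducing.subtypeVal.isPreconnected_image]
    rwa [Subtype.image_preimage_coe, inter_eq_self_of_subset_right hKs]
  exact hT.subset_connectedComponent hb ha

lemma exists_preconnected_of_mk_eq {s : Set X} {a b : s}
    (h : (ConnectedComponents.mk a = ConnectedComponents.mk b)) :
    ∃ K : Set X, IsPreconnected K ∧ K ⊆ s ∧ (a : X) ∈ K ∧ (b : X) ∈ K := by
  refine ⟨Subtype.val '' connectedComponent a,
    isPreconnected_connectedComponent.image _ continuous_subtype_val.continuousOn, ?_, ?_, ?_⟩
  · rintro x ⟨z, -, rfl⟩; exact z.2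
  · exact ⟨a, mem_connectedComponent, rfl⟩
  · exact ⟨b, ConnectedComponents.coe_eq_coe'.mp h.symm, rfl⟩

/-- The map from a fiber of `piMap` to the components of the preimage of the corresponding
component. -/
noncomputable def fiberMap (hf : Continuous f) (C : Set Y) (i : ConnectedComponents C)
    (k : {k : ConnectedComponents ↥(f ⁻¹' C) // piMap hf C k = i}) :
    ConnectedComponents ↥(f ⁻¹' compSet C i) :=
  ConnectedComponents.mk ⟨((Quotient.out k.1 : ↥(f ⁻¹' C)) : X),
    coe_mem_preimage_compSet hf C (by rw [CCmk_out]; exact k.2)⟩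

lemma fiberMap_injective (hf : Continuous f) (C : Set Y) (i : ConnectedComponents C) :
    Function.Injective (fiberMap hf C i) := by
  rintro ⟨k, hk⟩ ⟨k', hk'⟩ h
  simp only [fiberMap] at h
  obtain ⟨K, h1, h2, h3, h4⟩ := exists_preconnected_of_mk_eq h
  have h5 : ConnectedComponents.mk (Quotient.out k) = ConnectedComponents.mk (Quotient.out k') :=
    mk_eq_of_preconnected h1 (h2.trans (preimage_mono (compSet_subset C i))) h3 h4
  rw [CCmk_out, CCmk_out] at h5
  exact Subtype.ext h5

end Aux

section Num

lemma eabs_elog_top {x : ℕ∞} (h : x = 0 ∨ x = ⊤) : eabs (elog x) = ⊤ := by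
  rcases h with rfl | rfl <;> simp [eabs, elog]

lemma elog_nat_nonneg {a : ℕ} (ha : 1 ≤ a) : (0 : EReal) ≤ elog (a : ℕ∞) := by
  unfold elog
  rw [ENat.toENNReal_coe, ← ENNReal.log_one]
  exact ENNReal.log_monotone (by exact_mod_cast ha)

lemma key_num {a b c : ℕ} (ha : 1 ≤ a) (h : a ≤ b * c) :
    eabs (elog (a : ℕ∞)) - elog (b : ℕ∞) ≤ eabs (elog (c : ℕ∞)) := by
  have h1 := elog_nat_nonneg ha
  have h0 : eabs (elog (a : ℕ∞)) = elog (a : ℕ∞) := by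
    apply max_eq_left
    calc -(elog (a : ℕ∞)) ≤ -0 := EReal.neg_le_neg_iff.mpr h1
    _ = 0 := by simp
    _ ≤ _ := h1
  rw [h0]
  refine le_trans (EReal.sub_le_of_le_add' ?_) (le_max_left _ _)
  unfold elog
  rw [← ENNReal.log_mul_add]
  apply ENNReal.log_monotone
  rw [ENat.toENNReal_coe, ENat.toENNReal_coe, ENat.toENNReal_coe]
  exact_mod_cast h

lemma compCount_of_connected {Y : Type*} [TopologicalSpace Y] {C : Set Y} (h : IsConnected C) :
    compCount C = 1 := by
  haveI : ConnectedSpace C := Subtype.connectedSpace h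
  haveI : Subsingleton (ConnectedComponents C) := by
    constructor
    intro x y
    obtain ⟨a, rfl⟩ := ConnectedComponents.surjective_coe x
    obtain ⟨b, rfl⟩ := ConnectedComponents.surjective_coe y
    rw [ConnectedComponents.coe_eq_coe, PreconnectedSpace.connectedComponent_eq_univ,
      PreconnectedSpace.connectedComponent_eq_univ]
  haveI : Finite (ConnectedComponents C) := Finite.of_subsingleton
  haveI : Nonempty (ConnectedComponents C) := by
    obtain ⟨y, hy⟩ := h.nonempty
    exact ⟨ConnectedComponents.mk ⟨y, hy⟩⟩
  rw [compCount, ENat.card_eq_coe_natCard,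
    Nat.card_eq_one_iff_unique.mpr ⟨‹_›, inferInstance⟩, Nat.cast_one]

lemma finite_of_compCount_lt_top {Y : Type*} [TopologicalSpace Y] {C : Set Y}
    (h : compCount C < ⊤) : Finite (ConnectedComponents C) := by
  by_contra hc
  rw [not_finite_iff_infinite] at hc
  rw [compCount, ENat.card_eq_top_of_infinite] at h
  exact lt_irrefl _ h

lemma nonempty_of_compCount_pos {Y : Type*} [TopologicalSpace Y] {C : Set Y}
    (h : 0 < compCount C) : Nonempty (ConnectedComponents C) := by
  by_contra hc
  rw [not_nonempty_iff] at hc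
  rw [compCount, (ENat.card_eq_zero_iff_empty _).mpr hc] at h
  exact lt_irrefl _ h

end Num

/-- For a continuous map, the component seminorm equals the supremum over nonempty
connected subsets `C ⊆ Y` of `|log #I(f⁻¹C)|`. -/
theorem compNorm_eq_sup_connected {X Y : Type*} [TopologicalSpace X] [TopologicalSpace Y]
    (f : X → Y) (hf : Continuous f) :
    max 0 (⨆ (C : Set Y) (_ : IsConnected C), eabs (elog (compCount (f ⁻¹' C))))
      = compNorm f := by
  rw [compNorm]
  apply le_antisymm
  · apply max_le (le_max_left _ _)
    refine le_trans (iSup₂_le fun C hC => ?_) (le_max_right _ _)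
    have h1 : compCount C = 1 := compCount_of_connected hC
    refine le_iSup₂_of_le C ⟨by rw [h1]; exact zero_lt_one,
      by rw [h1]; exact lt_top_iff_ne_top.mpr (by simp)⟩ ?_
    rw [h1]
    have h2 : elog (1 : ℕ∞) = 0 := by simp [elog]
    rw [h2, sub_eq_add_neg, neg_zero, add_zero]
  · apply max_le (le_max_left _ _)
    refine iSup₂_le fun C hC => ?_
    obtain ⟨hC0, hCt⟩ := hC
    haveI hfin : Finite (ConnectedComponents C) := finite_of_compCount_lt_top hCt
    haveI hne : Nonempty (ConnectedComponents C) := nonempty_of_compCount_pos hC0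
    by_cases hA : ∃ i : ConnectedComponents C,
        compCount (f ⁻¹' compSet C i) = 0 ∨ compCount (f ⁻¹' compSet C i) = ⊤
    · obtain ⟨i, hi⟩ := hA
      exact le_top.trans (le_trans
        (le_iSup₂_of_le (compSet C i) (isConnected_compSet C i) (eabs_elog_top hi).ge)
        (le_max_right _ _))
    · push_neg at hA
      haveI hAf : ∀ i, Finite (ConnectedComponents ↥(f ⁻¹' compSet C i)) :=
        fun i => finite_of_compCount_lt_top (lt_top_iff_ne_top.mpr (hA i).2)
      haveI hAn : ∀ i, Nonempty (ConnectedComponents ↥(f ⁻¹' compSet C i)) :=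
        fun i => nonempty_of_compCount_pos (pos_iff_ne_zero.mpr (hA i).1)
      haveI : Nonempty ↥(f ⁻¹' C) := by
        have i := Classical.arbitrary (ConnectedComponents C)
        have k := Classical.arbitrary (ConnectedComponents ↥(f ⁻¹' compSet C i))
        have z := Quotient.out k
        exact ⟨⟨(z : X), (Set.preimage_mono (compSet_subset C i)) z.2⟩⟩
      haveI : Nonempty (ConnectedComponents ↥(f ⁻¹' C)) :=
        ⟨ConnectedComponents.mk (Classical.arbitrary _)⟩
      haveI hfib : ∀ i, Finite {k // piMap hf C k = i} :=
        fun i => Finite.of_injective _ (fiberMap_injective hf C i)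
      haveI : Finite (ConnectedComponents ↥(f ⁻¹' C)) :=
        Finite.of_equiv _ (Equiv.sigmaFiberEquiv (piMap hf C))
      obtain ⟨i₀, hi₀⟩ := Finite.exists_max
        (fun i : ConnectedComponents C => Nat.card (ConnectedComponents ↥(f ⁻¹' compSet C i)))
      classical
      haveI : Fintype (ConnectedComponents C) := Fintype.ofFinite _
      haveI : ∀ i, Fintype {k // piMap hf C k = i} := fun i => Fintype.ofFinite _
      have hcard : Nat.card (ConnectedComponents ↥(f ⁻¹' C))
          ≤ Nat.card (ConnectedComponents C)
            * Nat.card (ConnectedComponents ↥(f ⁻¹' compSet C i₀)) := by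
        rw [Nat.card_congr (Equiv.sigmaFiberEquiv (piMap hf C)).symm]
        rw [Nat.card_eq_fintype_card, Fintype.card_sigma]
        calc ∑ i, Fintype.card {k // piMap hf C k = i}
            ≤ Finset.univ.card
              • Nat.card (ConnectedComponents ↥(f ⁻¹' compSet C i₀)) := by
              apply Finset.sum_le_card_nsmul
              intro i _
              calc Fintype.card {k // piMap hf C k = i}
                  = Nat.card {k // piMap hf C k = i} := (Nat.card_eq_fintype_card).symm
                _ ≤ Nat.card (ConnectedComponents ↥(f ⁻¹' compSet C i)) :=
                    Nat.card_le_card_of_injective _ (fiberMap_injective hf C i)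
                _ ≤ _ := hi₀ i
          _ = _ := by rw [smul_eq_mul, Finset.card_univ, ← Nat.card_eq_fintype_card]
      have hm : compCount (f ⁻¹' C) = (Nat.card (ConnectedComponents ↥(f ⁻¹' C)) : ℕ∞) :=
        ENat.card_eq_coe_natCard _
      have hn : compCount C = (Nat.card (ConnectedComponents C) : ℕ∞) :=
        ENat.card_eq_coe_natCard _
      have hM : compCount (f ⁻¹' compSet C i₀)
          = (Nat.card (ConnectedComponents ↥(f ⁻¹' compSet C i₀)) : ℕ∞) :=
        ENat.card_eq_coe_natCard _
      rw [hm, hn]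
      refine le_trans (key_num Nat.card_pos hcard) ?_
      rw [← hM]
      exact le_trans (le_iSup₂_of_le (compSet C i₀) (isConnected_compSet C i₀) le_rfl)
        (le_max_right _ _)
end

section
/- If f: X → Y is a closed continuous surjection between topological spaces such that the preimage of every point is nonempty and connected (f is monotone), then the preimage of every connected subset of Y (equivalently: every closed connected subset) is nonempty and connected. -/
open Set

/-- A closed continuous monotone surjection (all point preimages nonempty and
connected) pulls connected subsets back to nonempty connected subsets. -/
theorem monotone_closed_preimage_connected
    {X Y : Type*} [TopologicalSpace X] [TopologicalSpace Y]
    (f : X → Y) (hcont : Continuous f) (hclosed : IsClosedMap f)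
    (hsurj : Function.Surjective f)
    (hmono : ∀ y : Y, IsConnected (f ⁻¹' {y})) :
    ∀ C : Set Y, IsConnected C → IsConnected (f ⁻¹' C) := by
  intro C hC
  refine ⟨hC.nonempty.preimage' (by simp [hsurj.range_eq]), ?_⟩
  rw [IsPreconnected]
  intro u v hu hv hsub hune hvne
  by_contra h
  push_neg at h
  -- For each y ∈ C, the fiber is contained in u or in v
  have hfib : ∀ y ∈ C, f ⁻¹' {y} ⊆ u ∨ f ⁻¹' {y} ⊆ v := by
    intro y hy
    have hfsub : f ⁻¹' {y} ⊆ f ⁻¹' C := by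
      intro x hx; simp only [mem_preimage, mem_singleton_iff] at hx
      simp [mem_preimage, hx, hy]
    have hdisj : Disjoint (f ⁻¹' {y} ∩ u) (f ⁻¹' {y} ∩ v) := by
      rw [Set.disjoint_iff_inter_eq_empty]
      ext x
      simp only [mem_inter_iff, mem_empty_iff_false, iff_false]
      rintro ⟨⟨hx1, hx2⟩, -, hx3⟩
      have : x ∈ f ⁻¹' C ∩ (u ∩ v) := ⟨hfsub hx1, hx2, hx3⟩
      rw [h] at this; exact this
    by_contra hcon
    push_neg at hcon
    obtain ⟨hnu, hnv⟩ := hcon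
    obtain ⟨a, ha, hau⟩ := not_subset.mp hnu
    obtain ⟨b, hb, hbv⟩ := not_subset.mp hnv
    have hbu : b ∈ u := (hsub (hfsub hb)).resolve_right hbv
    have hav : a ∈ v := (hsub (hfsub ha)).resolve_left hau
    obtain ⟨x, hx1, hx2, hx3⟩ := (hmono y).isPreconnected u v hu hv
      (fun z hz => hsub (hfsub hz)) ⟨b, hb, hbu⟩ ⟨a, ha, hav⟩
    have : x ∈ f ⁻¹' C ∩ (u ∩ v) := ⟨hfsub hx1, hx2, hx3⟩
    rw [h] at this; exact this
  -- Open sets in Y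
  set U : Set Y := (f '' uᶜ)ᶜ with hU
  set V : Set Y := (f '' vᶜ)ᶜ with hV
  have hUopen : IsOpen U := (hclosed _ hu.isClosed_compl).isOpen_compl
  have hVopen : IsOpen V := (hclosed _ hv.isClosed_compl).isOpen_compl
  have hmemU : ∀ y : Y, y ∈ U ↔ f ⁻¹' {y} ⊆ u := by
    intro y
    simp only [hU, mem_compl_iff, mem_image, not_exists, not_and]
    constructor
    · intro hy x hx
      simp only [mem_preimage, mem_singleton_iff] at hx
      by_contra hxu
      exact hy x hxu hx
    · intro hy x hxu hfx
      exact hxu (hy (by simp [mem_preimage, hfx]))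
  have hmemV : ∀ y : Y, y ∈ V ↔ f ⁻¹' {y} ⊆ v := by
    intro y
    simp only [hV, mem_compl_iff, mem_image, not_exists, not_and]
    constructor
    · intro hy x hx
      simp only [mem_preimage, mem_singleton_iff] at hx
      by_contra hxv
      exact hy x hxv hx
    · intro hy x hxv hfx
      exact hxv (hy (by simp [mem_preimage, hfx]))
  have hCsub : C ⊆ U ∪ V := by
    intro y hy
    rcases hfib y hy with h1 | h1
    · exact Or.inl ((hmemU y).mpr h1)
    · exact Or.inr ((hmemV y).mpr h1)
  have hCU : (C ∩ U).Nonempty := by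
    obtain ⟨x, hxC, hxu⟩ := hune
    refine ⟨f x, hxC, (hmemU _).mpr ?_⟩
    rcases hfib (f x) hxC with h1 | h1
    · exact h1
    · exfalso
      have : x ∈ f ⁻¹' C ∩ (u ∩ v) := ⟨hxC, hxu, h1 rfl⟩
      rw [h] at this; exact this
  have hCV : (C ∩ V).Nonempty := by
    obtain ⟨x, hxC, hxv⟩ := hvne
    refine ⟨f x, hxC, (hmemV _).mpr ?_⟩
    rcases hfib (f x) hxC with h1 | h1
    · exfalso
      have : x ∈ f ⁻¹' C ∩ (u ∩ v) := ⟨hxC, h1 rfl, hxv⟩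
      rw [h] at this; exact this
    · exact h1
  obtain ⟨y, hyC, hyU, hyV⟩ := hC.isPreconnected U V hUopen hVopen hCsub hCU hCV
  obtain ⟨x, hx⟩ := (hmono y).nonempty
  have : x ∈ f ⁻¹' C ∩ (u ∩ v) :=
    ⟨by simpa [mem_preimage] using hx ▸ hyC, (hmemU y).mp hyU hx, (hmemV y).mp hyV hx⟩
  rw [h] at this; exact this
end

section
/- For a function f: M → N between metric spaces, the left dual of the dilatation seminorm equals the expansion: ‖f‖_dil^{*L} = sup⁰_{x,y ∈ M}(d(f(x),f(y)) − d(x,y)), where the left dual is taken in the category of metric spaces with all functions as morphisms and ‖g‖_dil = sup⁰_{x,y}(d(x,y) − d(g(x),g(y))). Moreover the dilatation seminorm is left reflexive: ‖f‖_dil^{*L*L} = ‖f‖_dil. -/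
open scoped ENNReal

universe u

/-- Dilatation seminorm of a function between metric spaces. -/
noncomputable def dil {α β : Type u} [MetricSpace α] [MetricSpace β] (f : α → β) : ℝ≥0∞ :=
  ⨆ (x : α) (y : α), (edist x y - edist (f x) (f y))

/-- Left dual of the dilatation seminorm in the category of metric spaces with all
functions as morphisms: `‖f‖^{*L} = sup⁰_{f' : M' → M} (‖f'‖_dil - ‖f ∘ f'‖_dil)`. -/
noncomputable def dilLeftDual {M N : Type u} [MetricSpace M] [MetricSpace N]
    (f : M → N) : ℝ≥0∞ :=
  ⨆ (M' : Type u) (i : MetricSpace M') (f' : M' → M),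
    (@dil M' M i _ f' - @dil M' N i _ (f ∘ f'))

/-- Left bidual of the dilatation seminorm. -/
noncomputable def dilLeftBidual {M N : Type u} [MetricSpace M] [MetricSpace N]
    (f : M → N) : ℝ≥0∞ :=
  ⨆ (M' : Type u) (i : MetricSpace M') (f' : M' → M),
    (@dilLeftDual M' M i _ f' - @dilLeftDual M' N i _ (f ∘ f'))

/-! ### Auxiliary material -/

/-- Two-point metric space `{0, r} ⊆ ℝ`, lifted to universe `u`. -/
abbrev TwoPt (r : ℝ) : Type u := ULift.{u} {x : ℝ // x = 0 ∨ x = r}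

def pA (r : ℝ) : TwoPt.{u} r := ⟨⟨0, Or.inl rfl⟩⟩
def pB (r : ℝ) : TwoPt.{u} r := ⟨⟨r, Or.inr rfl⟩⟩

lemma twoPt_cases {r : ℝ} (u : TwoPt.{u} r) : u = pA r ∨ u = pB r := by
  obtain ⟨⟨x, hx⟩⟩ := u
  rcases hx with rfl | rfl
  · exact Or.inl rfl
  · exact Or.inr rfl

lemma edist_pA_pB {r : ℝ} (hr : 0 ≤ r) :
    edist (pA.{u} r) (pB.{u} r) = ENNReal.ofReal r := by
  show edist (0 : ℝ) r = ENNReal.ofReal r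
  rw [edist_dist, Real.dist_eq, abs_sub_comm, sub_zero, abs_of_nonneg hr]

lemma ennreal_sub_sub_ge (a b r : ℝ≥0∞) (hb : b ≤ r) (hr : r ≠ ∞) :
    b - a ≤ (r - a) - (r - b) := by
  rcases le_total b a with h | h
  · simp [tsub_eq_zero_of_le h]
  · have key : r - a = (r - b) + (b - a) := (tsub_add_tsub_cancel hb h).symm
    rw [key, ENNReal.add_sub_cancel_left ((tsub_le_self.trans_lt hr.lt_top).ne)]

lemma ennreal_sub_sub_ge' (a b r : ℝ≥0∞) : (a - b) - r ≤ (a - r) - (b - r) := by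
  rcases le_total b r with h | h
  · rw [tsub_eq_zero_of_le h, tsub_zero, tsub_tsub]
    exact tsub_le_tsub_left (self_le_add_left r b) a
  · calc (a - b) - r ≤ a - b := tsub_le_self
      _ = (a - r) - (b - r) := by rw [tsub_tsub, add_tsub_cancel_of_le h]

/-- Dilatation of a map out of the two-point space. -/
lemma dil_twoPt {α : Type u} [MetricSpace α] {r : ℝ} (hr : 0 ≤ r) (g : TwoPt.{u} r → α) :
    dil g = ENNReal.ofReal r - edist (g (pA r)) (g (pB r)) := by
  apply le_antisymm
  · refine iSup₂_le fun u v => ?_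
    rcases twoPt_cases u with rfl | rfl <;> rcases twoPt_cases v with rfl | rfl
    · simp
    · rw [edist_pA_pB hr]
    · rw [edist_comm, edist_pA_pB hr, edist_comm (g (pB r))]
    · simp
  · refine le_iSup₂_of_le (pA r) (pB r) ?_
    rw [edist_pA_pB hr]

/-- Expansion of a map out of the two-point space. -/
lemma exp_twoPt {α : Type u} [MetricSpace α] {r : ℝ} (hr : 0 ≤ r) (g : TwoPt.{u} r → α) :
    (⨆ (u : TwoPt.{u} r) (v : TwoPt.{u} r), (edist (g u) (g v) - edist u v)) =
      edist (g (pA r)) (g (pB r)) - ENNReal.ofReal r := by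
  apply le_antisymm
  · refine iSup₂_le fun u v => ?_
    rcases twoPt_cases u with rfl | rfl <;> rcases twoPt_cases v with rfl | rfl
    · simp
    · rw [edist_pA_pB hr]
    · rw [edist_comm (pB r), edist_pA_pB hr, edist_comm (g (pB r))]
    · simp
  · refine le_iSup₂_of_le (pA r) (pB r) ?_
    rw [edist_pA_pB hr]

lemma pB_ne_pA {r : ℝ} (hr : 0 < r) : pB.{u} r ≠ pA.{u} r := by
  intro h
  have : r = (0 : ℝ) := congrArg (fun z : TwoPt.{u} r => z.down.1) h
  exact hr.ne' this

/-- The left dual of the dilatation seminorm is the expansion. -/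
lemma dilLeftDual_eq {M N : Type u} [MetricSpace M] [MetricSpace N] (f : M → N) :
    dilLeftDual f = ⨆ (x : M) (y : M), (edist (f x) (f y) - edist x y) := by
  apply le_antisymm
  · refine iSup_le fun M' => iSup_le fun i => iSup_le fun f' => ?_
    rw [tsub_le_iff_right]
    refine iSup₂_le fun u v => ?_
    calc edist u v - edist (f' u) (f' v)
        ≤ (edist u v - edist (f (f' u)) (f (f' v))) +
          (edist (f (f' u)) (f (f' v)) - edist (f' u) (f' v)) := tsub_le_tsub_add_tsub
      _ ≤ (⨆ (x : M) (y : M), (edist (f x) (f y) - edist x y)) + dil (f ∘ f') := by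
          rw [add_comm]
          gcongr
          · exact le_iSup₂_of_le (f' u) (f' v) le_rfl
          · exact le_iSup₂_of_le u v le_rfl
  · refine iSup₂_le fun x y => ?_
    set r : ℝ := dist x y + dist (f x) (f y) + 1 with hrdef
    have hr : 0 < r := by positivity
    have hxr : edist x y ≤ ENNReal.ofReal r := by
      rw [edist_dist]
      exact ENNReal.ofReal_le_ofReal (by nlinarith [dist_nonneg (x := f x) (y := f y)])
    have hfr : edist (f x) (f y) ≤ ENNReal.ofReal r := by
      rw [edist_dist]
      exact ENNReal.ofReal_le_ofReal (by nlinarith [dist_nonneg (x := x) (y := y)])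
    set f' : TwoPt.{u} r → M := fun u => if u = pA r then x else y with hf'
    have hA : f' (pA r) = x := if_pos rfl
    have hB : f' (pB r) = y := if_neg (pB_ne_pA hr)
    have hd1 : dil f' = ENNReal.ofReal r - edist x y := by
      rw [dil_twoPt hr.le, hA, hB]
    have hd2 : dil (f ∘ f') = ENNReal.ofReal r - edist (f x) (f y) := by
      rw [dil_twoPt hr.le]
      simp [Function.comp, hA, hB]
    calc edist (f x) (f y) - edist x y
        ≤ (ENNReal.ofReal r - edist x y) - (ENNReal.ofReal r - edist (f x) (f y)) :=
          ennreal_sub_sub_ge _ _ _ hfr ENNReal.ofReal_ne_top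
      _ = dil f' - dil (f ∘ f') := by rw [hd1, hd2]
      _ ≤ dilLeftDual f :=
          le_iSup_of_le (TwoPt.{u} r) <| le_iSup_of_le inferInstance <|
            le_iSup_of_le f' le_rfl

/-- The left dual of the dilatation seminorm is the expansion
`sup⁰_{x,y} (d(f(x),f(y)) - d(x,y))`, and the dilatation seminorm is left
reflexive: its left bidual equals itself. -/
theorem dil_leftDual_and_reflexive {M N : Type u} [MetricSpace M] [MetricSpace N]
    (f : M → N) :
    dilLeftDual f = (⨆ (x : M) (y : M), (edist (f x) (f y) - edist x y)) ∧
    dilLeftBidual f = dil f := by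
  refine ⟨dilLeftDual_eq f, le_antisymm ?_ ?_⟩
  · refine iSup_le fun M' => iSup_le fun i => iSup_le fun f' => ?_
    rw [tsub_le_iff_right, dilLeftDual_eq, dilLeftDual_eq]
    refine iSup₂_le fun u v => ?_
    calc edist (f' u) (f' v) - edist u v
        ≤ (edist (f' u) (f' v) - edist (f (f' u)) (f (f' v))) +
          (edist (f (f' u)) (f (f' v)) - edist u v) := tsub_le_tsub_add_tsub
      _ ≤ dil f + (⨆ (a : M') (b : M'), (edist ((f ∘ f') a) ((f ∘ f') b) - edist a b)) := by
          gcongr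
          · exact le_iSup₂_of_le (f' u) (f' v) le_rfl
          · exact le_iSup₂_of_le u v le_rfl
  · refine iSup₂_le fun x y => ?_
    refine ENNReal.le_of_forall_pos_le_add fun ε hε _ => ?_
    set r : ℝ := (ε : ℝ) with hrdef
    have hr : 0 < r := hε
    have her : ENNReal.ofReal r = (ε : ℝ≥0∞) := ENNReal.ofReal_coe_nnreal
    set f' : TwoPt.{u} r → M := fun u => if u = pA r then x else y with hf'
    have hA : f' (pA r) = x := if_pos rfl
    have hB : f' (pB r) = y := if_neg (pB_ne_pA hr)
    have hd1 : dilLeftDual f' = edist x y - ENNReal.ofReal r := by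
      rw [dilLeftDual_eq, exp_twoPt hr.le, hA, hB]
    have hd2 : dilLeftDual (f ∘ f') = edist (f x) (f y) - ENNReal.ofReal r := by
      rw [dilLeftDual_eq, exp_twoPt hr.le]
      simp [Function.comp, hA, hB]
    have key : (edist x y - edist (f x) (f y)) - ENNReal.ofReal r ≤ dilLeftBidual f :=
      calc (edist x y - edist (f x) (f y)) - ENNReal.ofReal r
          ≤ (edist x y - ENNReal.ofReal r) - (edist (f x) (f y) - ENNReal.ofReal r) :=
            ennreal_sub_sub_ge' _ _ _
        _ = dilLeftDual f' - dilLeftDual (f ∘ f') := by rw [hd1, hd2]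
        _ ≤ dilLeftBidual f :=
            le_iSup_of_le (TwoPt.{u} r) <| le_iSup_of_le inferInstance <|
              le_iSup_of_le f' le_rfl
    rw [← her]
    exact tsub_le_iff_right.mp key
end
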